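/- If the inverse multifunction (∂f)^{-1} of the subdifferential of a proper lsc convex function f is locally upper Lipschitz continuous at the origin with modulus κ, then ∂f satisfies the error bound condition: for any δ > 0 there exists κ′ > 0 such that dist(x, (∂f)^{-1}(0)) ≤ κ′·dist(0, ∂f(x)) for all x with dist(x, (∂f)^{-1}(0)) ≤ δ. -/

import Mathlib

/-!
Let `v` be a least-norm element of `∂f(x)`, so `‖v‖ = dist(0, ∂f(x))`; it exists because `∂f(x)`
is closed and, `f` being a finite convex function on `ℝⁿ` and hence continuous, nonempty.
If `‖v‖ ≤ ε`, upper Lipschitz continuity gives `dist(x, S) ≤ κ‖v‖` for `S = (∂f)⁻¹(0)`;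
otherwise `dist(x, S) ≤ δ ≤ (δ/ε)‖v‖`. Hence `κ' = κ + δ/ε` works.
-/

open scoped InnerProductSpace RealInnerProductSpace

/-- Convex subdifferential of a real-valued function. -/
def convexSubdiff {n : ℕ} (f : EuclideanSpace ℝ (Fin n) → ℝ)
    (x : EuclideanSpace ℝ (Fin n)) : Set (EuclideanSpace ℝ (Fin n)) :=
  {v | ∀ y, f x + ⟪v, y - x⟫_ℝ ≤ f y}

/- Separate `(x, f x)` from the open convex strict epigraph by a functional `ℓ`; the
coefficient `c = ℓ (0, 1)` of the vertical direction is negative, and `ℓ / (-c)` restricted to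
`E` is the subgradient. -/
theorem ConvexOn.exists_subgradient_of_continuous {E : Type*} [NormedAddCommGroup E]
    [NormedSpace ℝ E] {f : E → ℝ} (hf : ConvexOn ℝ Set.univ f) (hfc : Continuous f) (x : E) :
    ∃ g : StrongDual ℝ E, ∀ y, f x + g (y - x) ≤ f y := by
  have hopen : IsOpen {p : E × ℝ | p.1 ∈ Set.univ ∧ f p.1 < p.2} :=
    (isOpen_univ.preimage continuous_fst).inter (isOpen_lt (hfc.comp continuous_fst) continuous_snd)
  obtain ⟨ℓ, hℓ⟩ := geometric_hahn_banach_open_point hf.convex_strict_epigraph hopen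
    (by simp : (x, f x) ∉ {p : E × ℝ | p.1 ∈ Set.univ ∧ f p.1 < p.2})
  set c := ℓ (0, 1)
  have hsplit : ∀ y t, ℓ (y, t) = ℓ (y, 0) + t * c := fun y t => by
    rw [← smul_eq_mul, ← map_smul, ← map_add]
    simp
  have key : ∀ y t, f y < t → ℓ (y, 0) + t * c < ℓ (x, 0) + f x * c := fun y t h => by
    have := hℓ (y, t) ⟨trivial, h⟩
    rwa [hsplit y t, hsplit x (f x)] at this
  have hc : 0 < -c := by linarith [key x (f x + 1) (by linarith)]
  refine ⟨(-c)⁻¹ • ℓ.comp (ContinuousLinearMap.inl ℝ E ℝ), fun y => ?_⟩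
  have hle : f x + (-c)⁻¹ * (ℓ (y, 0) - ℓ (x, 0)) ≤ f y :=
    le_of_forall_gt_imp_ge_of_dense fun t ht => by
      have := key y t ht
      rw [← le_sub_iff_add_le', inv_mul_le_iff₀ hc]
      linarith
  show f x + (-c)⁻¹ * ℓ (y - x, 0) ≤ f y
  rwa [show ((y - x, 0) : E × ℝ) = (y, 0) - (x, 0) by simp, map_sub]

theorem convexSubdiff_nonempty {n : ℕ} {f : EuclideanSpace ℝ (Fin n) → ℝ}
    (hf : ConvexOn ℝ Set.univ f) (x : EuclideanSpace ℝ (Fin n)) :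
    (convexSubdiff f x).Nonempty := by
  obtain ⟨g, hg⟩ := hf.exists_subgradient_of_continuous
    (continuousOn_univ.mp (hf.continuousOn isOpen_univ)) x
  exact ⟨(InnerProductSpace.toDual ℝ _).symm g, fun y => by
    simpa only [InnerProductSpace.toDual_symm_apply] using hg y⟩

theorem isClosed_convexSubdiff {n : ℕ} (f : EuclideanSpace ℝ (Fin n) → ℝ)
    (x : EuclideanSpace ℝ (Fin n)) : IsClosed (convexSubdiff f x) := by
  simp only [convexSubdiff, Set.ofPred_forall]
  exact isClosed_iInter fun y => isClosed_le (by fun_prop) continuous_const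

theorem infDist_le_mul_infDist_zero_of_forall_norm_le {E F : Type*} [PseudoMetricSpace E]
    [NormedAddCommGroup F] [ProperSpace F] {T : E → Set F} {S : Set E}
    (hT_closed : ∀ x, IsClosed (T x)) (hT_ne : ∀ x, (T x).Nonempty) {κ ε δ : ℝ}
    (hκ : 0 ≤ κ) (hε : 0 < ε)
    (hbound : ∀ x, ∀ v ∈ T x, ‖v‖ ≤ ε → ∃ z ∈ S, dist x z ≤ κ * ‖v‖)
    {x : E} (hx : Metric.infDist x S ≤ δ) :
    Metric.infDist x S ≤ (κ + δ / ε) * Metric.infDist 0 (T x) := by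
  obtain ⟨v, hv, hvd⟩ := (hT_closed x).exists_infDist_eq_dist (hT_ne x) 0
  rw [hvd, dist_zero_left]
  have hδ : 0 ≤ δ := Metric.infDist_nonneg.trans hx
  rcases le_or_gt ‖v‖ ε with hvε | hvε
  · obtain ⟨z, hz, hxz⟩ := hbound x v hv hvε
    calc Metric.infDist x S ≤ κ * ‖v‖ := (Metric.infDist_le_dist_of_mem hz).trans hxz
      _ ≤ (κ + δ / ε) * ‖v‖ := by gcongr; exact le_add_of_nonneg_right (by positivity)
  · calc Metric.infDist x S ≤ δ / ε * ε := by rwa [div_mul_cancel₀ _ hε.ne']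
      _ ≤ (κ + δ / ε) * ‖v‖ := by gcongr; exact le_add_of_nonneg_left hκ

theorem upper_lipschitz_inverse_implies_error_bound_general {n : ℕ}
    (f : EuclideanSpace ℝ (Fin n) → ℝ)
    (hf_conv : ConvexOn ℝ Set.univ f)
    (κ : ℝ) (hκ : 0 ≤ κ) (ε : ℝ) (hε : 0 < ε)
    (hupper : ∀ v : EuclideanSpace ℝ (Fin n), ‖v‖ ≤ ε →
      {x | v ∈ convexSubdiff f x} ⊆
        {x | ∃ z, (0 : EuclideanSpace ℝ (Fin n)) ∈ convexSubdiff f z ∧ ‖x - z‖ ≤ κ * ‖v‖}) :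
    ∀ δ > (0 : ℝ), ∃ κ' > (0 : ℝ), ∀ x : EuclideanSpace ℝ (Fin n),
      Metric.infDist x {z | (0 : EuclideanSpace ℝ (Fin n)) ∈ convexSubdiff f z} ≤ δ →
      Metric.infDist x {z | (0 : EuclideanSpace ℝ (Fin n)) ∈ convexSubdiff f z} ≤
        κ' * Metric.infDist 0 (convexSubdiff f x) := by
  intro δ hδ
  refine ⟨κ + δ / ε, by positivity, fun x hx => ?_⟩
  refine infDist_le_mul_infDist_zero_of_forall_norm_le (isClosed_convexSubdiff f)
    (convexSubdiff_nonempty hf_conv) hκ hε (fun y v hv hvε => ?_) hx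
  obtain ⟨z, hz, hyz⟩ := hupper v hvε hv
  exact ⟨z, hz, by rwa [dist_eq_norm]⟩

/-- if `(∂f)⁻¹` is locally upper Lipschitz at the origin with modulus
`κ`, then `∂f` satisfies the error bound condition. -/
theorem upper_lipschitz_inverse_implies_error_bound {n : ℕ}
    (f : EuclideanSpace ℝ (Fin n) → ℝ)
    (hf_conv : ConvexOn ℝ Set.univ f) (hf_lsc : LowerSemicontinuous f)
    (κ : ℝ) (hκ : 0 ≤ κ) (ε : ℝ) (hε : 0 < ε)
    (hupper : ∀ v : EuclideanSpace ℝ (Fin n), ‖v‖ ≤ ε →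
      {x | v ∈ convexSubdiff f x} ⊆
        {x | ∃ z, (0 : EuclideanSpace ℝ (Fin n)) ∈ convexSubdiff f z ∧ ‖x - z‖ ≤ κ * ‖v‖}) :
    ∀ δ > (0 : ℝ), ∃ κ' > (0 : ℝ), ∀ x : EuclideanSpace ℝ (Fin n),
      Metric.infDist x {z | (0 : EuclideanSpace ℝ (Fin n)) ∈ convexSubdiff f z} ≤ δ →
      Metric.infDist x {z | (0 : EuclideanSpace ℝ (Fin n)) ∈ convexSubdiff f z} ≤
        κ' * Metric.infDist 0 (convexSubdiff f x) :=
  upper_lipschitz_inverse_implies_error_bound_general f hf_conv κ hκ ε hε hupper
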